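/- arXiv:2512.23006 — 6 statements merged into one kernel-verified Lean document; each statement's English description precedes it below -/
import Mathlib

section
/- For n ≥ 1, the permutahedron Π_n, defined as the convex hull of all points (σ(1),...,σ(n)) for σ in the symmetric group S_n, equals the set of points (x_1,...,x_n) in R^n such that x_1+...+x_n = n(n+1)/2 and for every nonempty proper subset S ⊆ [n], the sum of x_i over i ∈ S is at least binom(|S|+1, 2). -/
/-!
The vertices satisfy the inequalities because `k` distinct naturals sum to at least
`0 + 1 + ⋯ + (k - 1)`, and the inequalities cut out a convex set. Conversely, induct on the
dimension. If some nonempty proper `S` is tight, i.e. `x_S = binom(|S|+1, 2)`, then `x`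
restricted to `S` lies in the permutahedron on `S` and `x` restricted to the complement lies in
the permutahedron on the complement shifted by `|S|`; both are convex hulls of vertices by
induction, and gluing a vertex of each gives a vertex of `Π_n`. If no such `S` is tight, pick
`i ≠ j` and move `x` along `±(e_i - e_j)` until a constraint becomes tight: `x` lies on the
segment between the two tight points.
-/

open Finset

lemma Finset.sum_range_card_le_sum_of_injective {ι : Type*} {f : ι → ℕ}
    (hf : Function.Injective f) (S : Finset ι) : ∑ j ∈ range #S, j ≤ ∑ i ∈ S, f i := by
  have hinj : Function.Injective fun i => (f i : ℤ) := Nat.cast_injective.comp hf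
  have h := sum_range_le_sum (s := S.image fun i => (f i : ℤ)) (c := 0) (by simp)
  rw [card_image_of_injective _ hinj, sum_image fun _ _ _ _ h => hinj h] at h
  zify
  simpa using h

lemma Convex.mem_of_add_smul_mem_of_sub_smul_mem {E : Type*} [AddCommGroup E] [Module ℝ E]
    {s : Set E} (hs : Convex ℝ s) {x v : E} {t u : ℝ} (ht : 0 < t) (hu : 0 < u)
    (h₁ : x + t • v ∈ s) (h₂ : x - u • v ∈ s) : x ∈ s := by
  have key := hs.add_smul_sub_mem h₂ h₁ (t := u / (t + u)) ⟨by positivity, ?_⟩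
  · convert key using 1
    rw [add_sub_sub_cancel, ← add_smul, smul_smul, div_mul_cancel₀ _ (by positivity)]
    abel
  · rw [div_le_one (by positivity)]
    linarith

namespace Permutahedron

/-- The sum of the `k` smallest coordinates of a vertex; `binom(k + 1, 2)` when `c = 1`. -/
def lowerBound (c : ℝ) (k : ℕ) : ℝ := ∑ j ∈ range k, (c + j)

/-- The vertices of the permutahedron on `ι` shifted so that its smallest coordinate is `c`;
`Π_n` is the case `ι = Fin n`, `c = 1`. -/
def vertices (ι : Type*) [Fintype ι] (c : ℝ) : Set (ι → ℝ) :=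
  {p | ∃ e : ι ≃ Fin (Fintype.card ι), p = fun i => c + e i}

def polyhedron (ι : Type*) [Fintype ι] (c : ℝ) : Set (ι → ℝ) :=
  {x | ∑ i, x i = lowerBound c (Fintype.card ι) ∧
    ∀ S : Finset ι, lowerBound c #S ≤ ∑ i ∈ S, x i}

lemma lowerBound_add (c : ℝ) (k l : ℕ) :
    lowerBound c (k + l) = lowerBound c k + lowerBound (c + k) l := by
  simp only [lowerBound, sum_range_add, Nat.cast_add, add_assoc]

lemma lowerBound_one_eq_choose (k : ℕ) : lowerBound 1 k = ((k + 1).choose 2 : ℕ) := by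
  rw [lowerBound, Nat.choose_two_right, ← sum_range_id, sum_range_succ']
  push_cast
  simp [add_comm]

lemma vertices_fin_one (n : ℕ) :
    vertices (Fin n) 1 = {p | ∃ σ : Equiv.Perm (Fin n), p = fun i => (σ i : ℝ) + 1} := by
  ext p
  constructor
  · rintro ⟨e, rfl⟩
    exact ⟨e.trans (finCongr (Fintype.card_fin n)), by ext i; simp [add_comm]⟩
  · rintro ⟨σ, rfl⟩
    exact ⟨σ.trans (finCongr (Fintype.card_fin n).symm), by ext i; simp [add_comm]⟩

variable {ι : Type*} [Fintype ι]

lemma polyhedron_one_eq :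
    polyhedron ι 1 = {x | ∑ i, x i = (Fintype.card ι * (Fintype.card ι + 1) : ℝ) / 2 ∧
      ∀ S : Finset ι, S.Nonempty → S ≠ univ → ((#S + 1).choose 2 : ℝ) ≤ ∑ i ∈ S, x i} := by
  have htotal :
      lowerBound 1 (Fintype.card ι) = (Fintype.card ι * (Fintype.card ι + 1) : ℝ) / 2 := by
    rw [lowerBound_one_eq_choose, Nat.cast_choose_two]
    push_cast
    ring
  ext x
  simp only [polyhedron, Set.mem_ofPred_eq, htotal, lowerBound_one_eq_choose]
  refine and_congr_right fun hsum => ⟨fun h S _ _ => h S, fun h S => ?_⟩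
  rcases S.eq_empty_or_nonempty with rfl | hSne
  · simp
  by_cases hSuniv : S = univ
  · rw [hSuniv, card_univ, ← lowerBound_one_eq_choose, htotal, hsum]
  exact h S hSne hSuniv

lemma vertices_subset_polyhedron (c : ℝ) : vertices ι c ⊆ polyhedron ι c := by
  rintro _ ⟨e, rfl⟩
  refine ⟨?_, fun S => ?_⟩
  · rw [lowerBound, ← Fin.sum_univ_eq_sum_range, e.sum_comp (fun j : Fin _ => c + j)]
  · rw [lowerBound, sum_add_distrib, sum_add_distrib, sum_const, sum_const, card_range]
    gcongr
    rw [← Nat.cast_sum, ← Nat.cast_sum, Nat.cast_le]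
    exact sum_range_card_le_sum_of_injective (f := fun i => (e i : ℕ))
      (Fin.val_injective.comp e.injective) S

lemma convex_polyhedron (c : ℝ) : Convex ℝ (polyhedron ι c) := by
  intro x hx y hy a b ha hb hab
  have hsum : ∀ S : Finset ι,
      ∑ i ∈ S, (a • x + b • y) i = a * ∑ i ∈ S, x i + b * ∑ i ∈ S, y i := by
    simp [sum_add_distrib, mul_sum]
  refine ⟨by rw [hsum, hx.1, hy.1, ← add_mul, hab, one_mul], fun S => ?_⟩
  calc lowerBound c #S = a * lowerBound c #S + b * lowerBound c #S := by
        rw [← add_mul, hab, one_mul]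
    _ ≤ _ := by
      rw [hsum]
      exact add_le_add (mul_le_mul_of_nonneg_left (hx.2 S) ha)
        (mul_le_mul_of_nonneg_left (hy.2 S) hb)

lemma polyhedron_subset_vertices_of_subsingleton [Subsingleton ι] (c : ℝ) :
    polyhedron ι c ⊆ vertices ι c := by
  intro x hx
  refine ⟨Fintype.equivFin ι, funext fun i => ?_⟩
  have : Unique ι := uniqueOfSubsingleton i
  have hx₁ := hx.1
  rw [Fintype.sum_unique, Fintype.card_unique, lowerBound, sum_range_one] at hx₁
  have h₀ : ((Fintype.equivFin ι) i : ℕ) = 0 :=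
    Nat.lt_one_iff.mp (by simpa using ((Fintype.equivFin ι) i).isLt)
  rw [h₀, Subsingleton.elim i default, hx₁]

lemma restrict_mem_polyhedron {c : ℝ} {x : ι → ℝ} (hx : x ∈ polyhedron ι c) {S : Finset ι}
    (hS : ∑ i ∈ S, x i = lowerBound c #S) :
    (fun i : {i // i ∈ S} => x i) ∈ polyhedron {i // i ∈ S} c := by
  refine ⟨by rwa [sum_coe_sort S x, Fintype.card_coe], fun U => ?_⟩
  simpa [sum_map] using hx.2 (U.map (Function.Embedding.subtype _))

section DecidableEq

variable [DecidableEq ι]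

lemma restrict_compl_mem_polyhedron {c : ℝ} {x : ι → ℝ} (hx : x ∈ polyhedron ι c)
    {S : Finset ι} (hS : ∑ i ∈ S, x i = lowerBound c #S) :
    (fun i : {i // i ∉ S} => x i) ∈ polyhedron {i // i ∉ S} (c + #S) := by
  have hcard : #S + Fintype.card {i // i ∉ S} = Fintype.card ι := by
    rw [Fintype.card_subtype_compl, Fintype.card_coe]
    exact Nat.add_sub_cancel' (card_le_univ S)
  refine ⟨?_, fun U => ?_⟩
  · have hsplit := sum_compl_add_sum S x
    have htotal := hx.1
    rw [sum_subtype Sᶜ (fun i => mem_compl) x] at hsplit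
    rw [← hcard, lowerBound_add, ← hS] at htotal
    show ∑ i : {i // i ∉ S}, x i = _
    linarith
  · set U' := U.map (Function.Embedding.subtype _)
    have hdisj : Disjoint S U' := by
      simp only [U', disjoint_left, mem_map]
      rintro _ hS ⟨i, -, rfl⟩
      exact i.2 hS
    have h := hx.2 (S.disjUnion U' hdisj)
    rw [card_disjUnion, sum_disjUnion, lowerBound_add, hS, card_map, sum_map] at h
    simpa using h

lemma mem_convexHull_of_restrict_mem {c : ℝ} {x : ι → ℝ} (S : Finset ι)
    (h₁ : (fun i : {i // i ∈ S} => x i) ∈ convexHull ℝ (vertices {i // i ∈ S} c))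
    (h₂ : (fun i : {i // i ∉ S} => x i) ∈ convexHull ℝ (vertices {i // i ∉ S} (c + #S))) :
    x ∈ convexHull ℝ (vertices ι c) := by
  let e := Equiv.sumCompl (· ∈ S)
  let glue := (LinearEquiv.funCongrLeft ℝ ℝ e.symm).toLinearMap ∘ₗ
    (LinearEquiv.sumArrowLequivProdArrow {i // i ∈ S} {i // i ∉ S} ℝ ℝ).symm.toLinearMap
  have hglue : ∀ y, glue y = fun i => Sum.elim y.1 y.2 (e.symm i) := fun _ => rfl
  have hx : glue (fun i => x i, fun i => x i) = x := by
    funext i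
    obtain ⟨a | b, rfl⟩ := e.surjective i <;> simp [hglue, e]
  have hcard : #S + Fintype.card {i // i ∉ S} = Fintype.card ι := by
    rw [← Fintype.card_coe S, ← Fintype.card_sum, Fintype.card_congr e]
  have hmem := Set.mem_image_of_mem glue (mk_mem_convexHull_prod h₁ h₂)
  rw [glue.image_convexHull, hx] at hmem
  refine convexHull_mono ?_ hmem
  rintro _ ⟨⟨_, _⟩, ⟨⟨e₁, rfl⟩, ⟨e₂, rfl⟩⟩, rfl⟩
  refine ⟨e.symm.trans (((e₁.trans (finCongr (Fintype.card_coe S))).sumCongr e₂).trans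
    (finSumFinEquiv.trans (finCongr hcard))), funext fun i => ?_⟩
  obtain ⟨a | b, rfl⟩ := e.surjective i <;> simp [hglue, add_assoc]

/-- `t` is the least slack of a set containing `j` but not `i`: moving mass from `j` to `i` by
`t` keeps every constraint and makes that set tight. -/
lemma exists_add_smul_single_sub_single_mem_tight {c : ℝ} {x : ι → ℝ}
    (hx : x ∈ polyhedron ι c)
    (hslack : ∀ S : Finset ι, S.Nonempty → S ≠ univ → ∑ i ∈ S, x i ≠ lowerBound c #S)
    {i j : ι} (hij : i ≠ j) :
    ∃ t : ℝ, 0 < t ∧ ∃ S : Finset ι, S.Nonempty ∧ S ≠ univ ∧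
      x + t • (Pi.single i 1 - Pi.single j 1 : ι → ℝ) ∈ polyhedron ι c ∧
      ∑ k ∈ S, (x + t • (Pi.single i 1 - Pi.single j 1 : ι → ℝ)) k = lowerBound c #S := by
  obtain ⟨S, hSF, hmin⟩ := (univ.filter fun S : Finset ι => j ∈ S ∧ i ∉ S).exists_min_image
    (fun S => ∑ k ∈ S, x k - lowerBound c #S) ⟨{j}, by simp [hij]⟩
  simp only [mem_filter, mem_univ, true_and, and_imp] at hSF hmin
  obtain ⟨hjS, hiS⟩ := hSF
  have hSne : S.Nonempty := ⟨j, hjS⟩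
  have hSuniv : S ≠ univ := fun h => hiS (h ▸ mem_univ i)
  set t := ∑ k ∈ S, x k - lowerBound c #S
  have ht : 0 < t := sub_pos.2 (lt_of_le_of_ne (hx.2 S) (hslack S hSne hSuniv).symm)
  have hsum : ∀ T : Finset ι, ∑ k ∈ T, (x + t • (Pi.single i 1 - Pi.single j 1 : ι → ℝ)) k =
      ∑ k ∈ T, x k + t * ((if i ∈ T then 1 else 0) - (if j ∈ T then 1 else 0)) := by
    intro T
    simp [sum_add_distrib, sum_sub_distrib, ← mul_sum, sum_pi_single']
  refine ⟨t, ht, S, hSne, hSuniv,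
    ⟨by rw [hsum]; simpa using hx.1, fun T => ?_⟩, by rw [hsum]; simp [hiS, hjS, t]⟩
  rw [hsum]
  have hT := hx.2 T
  by_cases hiT : i ∈ T <;> by_cases hjT : j ∈ T
  all_goals simp only [hiT, hjT, if_true, if_false]
  · linarith
  · linarith
  · linarith [hmin T hjT hiT]
  · linarith

end DecidableEq

theorem polyhedron_subset_convexHull (c : ℝ) :
    polyhedron ι c ⊆ convexHull ℝ (vertices ι c) := by
  classical
  induction h : Fintype.card ι using Nat.strong_induction_on generalizing ι c with
  | _ m ih =>
  have of_tight : ∀ y ∈ polyhedron ι c, ∀ S : Finset ι, S.Nonempty → S ≠ univ →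
      ∑ i ∈ S, y i = lowerBound c #S → y ∈ convexHull ℝ (vertices ι c) := by
    intro y hy S hSne hSuniv hS
    obtain ⟨i, hi⟩ := hSne
    obtain ⟨j, hj⟩ := not_forall.1 (mt eq_univ_iff_forall.2 hSuniv)
    exact mem_convexHull_of_restrict_mem S
      (ih _ (h ▸ Fintype.card_subtype_lt (p := (· ∈ S)) hj) c rfl
        (restrict_mem_polyhedron hy hS))
      (ih _ (h ▸ Fintype.card_subtype_lt (p := (· ∉ S)) (not_not.2 hi)) _ rfl
        (restrict_compl_mem_polyhedron hy hS))
  intro x hx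
  by_cases htight : ∃ S : Finset ι, S.Nonempty ∧ S ≠ univ ∧ ∑ i ∈ S, x i = lowerBound c #S
  · obtain ⟨S, hSne, hSuniv, hS⟩ := htight
    exact of_tight x hx S hSne hSuniv hS
  push Not at htight
  rcases subsingleton_or_nontrivial ι with hι | hι
  · exact subset_convexHull ℝ _ (polyhedron_subset_vertices_of_subsingleton c hx)
  obtain ⟨i, j, hij⟩ := exists_pair_ne ι
  obtain ⟨t, ht, S, hSne, hSuniv, hy, hS⟩ :=
    exists_add_smul_single_sub_single_mem_tight hx htight hij
  obtain ⟨u, hu, T, hTne, hTuniv, hz, hT⟩ :=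
    exists_add_smul_single_sub_single_mem_tight hx htight hij.symm
  rw [← neg_sub, smul_neg, ← sub_eq_add_neg] at hz hT
  exact (convex_convexHull ℝ _).mem_of_add_smul_mem_of_sub_smul_mem ht hu
    (of_tight _ hy S hSne hSuniv hS) (of_tight _ hz T hTne hTuniv hT)

theorem convexHull_vertices (c : ℝ) : convexHull ℝ (vertices ι c) = polyhedron ι c :=
  (convexHull_min (vertices_subset_polyhedron c) (convex_polyhedron c)).antisymm
    (polyhedron_subset_convexHull c)

end Permutahedron

theorem permutahedron_H_description_general (n : ℕ) :
    convexHull ℝ {p : Fin n → ℝ | ∃ σ : Equiv.Perm (Fin n), p = fun i => (σ i : ℝ) + 1} =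
      {x : Fin n → ℝ |
        (∑ i, x i) = (n * (n + 1) : ℝ) / 2 ∧
        ∀ S : Finset (Fin n), S.Nonempty → S ≠ Finset.univ →
          ((S.card + 1).choose 2 : ℝ) ≤ ∑ i ∈ S, x i} := by
  rw [← Permutahedron.vertices_fin_one, Permutahedron.convexHull_vertices,
    Permutahedron.polyhedron_one_eq, Fintype.card_fin]

theorem permutahedron_H_description (n : ℕ) (hn : 1 ≤ n) :
    convexHull ℝ {p : Fin n → ℝ | ∃ σ : Equiv.Perm (Fin n), p = fun i => (σ i : ℝ) + 1} =
      {x : Fin n → ℝ |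
        (∑ i, x i) = (n * (n + 1) : ℝ) / 2 ∧
        ∀ S : Finset (Fin n), S.Nonempty → S ≠ Finset.univ →
          ((S.card + 1).choose 2 : ℝ) ≤ ∑ i ∈ S, x i} :=
  permutahedron_H_description_general n
end

section
/- For the Gale order on k-subsets of [n], given U = {u_1 < ... < u_k} and L = {l_1 < ... < l_k} with U ≤_G L, the set of B with U ≤_G B ≤_G L is the collection of bases of a matroid on [n] (i.e., it is nonempty and satisfies the basis exchange axiom). -/
/-- The Gale order on `k`-element subsets of `Fin n`: compare the increasing
enumerations entrywise. -/
def GaleLE {n k : ℕ} (U L : Finset (Fin n)) (hU : U.card = k) (hL : L.card = k) : Prop :=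
  ∀ i : Fin k, U.orderEmbOfFin hU i ≤ L.orderEmbOfFin hL i

namespace GaleAux

variable {n k : ℕ}

def cnt (S : Finset (Fin n)) (t : ℕ) : ℕ := (S.filter (fun z : Fin n => (z : ℕ) < t)).card

lemma cnt_zero (S : Finset (Fin n)) : cnt S 0 = 0 := by simp [cnt]

lemma cnt_top (S : Finset (Fin n)) : cnt S n = S.card := by
  unfold cnt
  rw [Finset.filter_true_of_mem (fun (z : Fin n) _ => z.isLt)]

lemma cnt_eq (S : Finset (Fin n)) (h : S.card = k) (t : ℕ) :
    cnt S t =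
      (Finset.univ.filter (fun i : Fin k => ((S.orderEmbOfFin h i : Fin n) : ℕ) < t)).card := by
  unfold cnt
  symm
  apply Finset.card_bij (fun i _ => S.orderEmbOfFin h i)
  · intro i hi
    simp only [Finset.mem_filter, Finset.mem_univ, true_and] at hi
    exact Finset.mem_filter.2 ⟨S.orderEmbOfFin_mem h i, hi⟩
  · intro i _ j _ hij
    exact (S.orderEmbOfFin h).injective hij
  · intro z hz
    unfold cnt at hz
    simp only [Finset.mem_filter] at hz
    have hr : z ∈ Set.range (S.orderEmbOfFin h) := by
      rw [S.range_orderEmbOfFin h]; exact hz.1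
    obtain ⟨i, hi⟩ := hr
    exact ⟨i, by simp only [Finset.mem_filter, Finset.mem_univ, true_and]; rw [hi]; exact hz.2, hi⟩

lemma galeLE_iff (S T : Finset (Fin n)) (hS : S.card = k) (hT : T.card = k) :
    GaleLE S T hS hT ↔ ∀ t, cnt T t ≤ cnt S t := by
  constructor
  · intro hG t
    rw [cnt_eq T hT t, cnt_eq S hS t]
    apply Finset.card_le_card
    intro i hi
    simp only [Finset.mem_filter, Finset.mem_univ, true_and] at hi ⊢
    exact lt_of_le_of_lt (Fin.le_def.mp (hG i)) hi
  · intro hc i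
    by_contra hlt
    push_neg at hlt
    set t := ((S.orderEmbOfFin hS i : Fin n) : ℕ) with ht
    have h1 : cnt S t = (i : ℕ) := by
      rw [cnt_eq S hS t]
      have he : Finset.univ.filter (fun j : Fin k => ((S.orderEmbOfFin hS j : Fin n) : ℕ) < t)
          = Finset.Iio i := by
        ext j
        simp only [Finset.mem_filter, Finset.mem_univ, true_and, Finset.mem_Iio, ht]
        constructor
        · intro hj
          by_contra hji
          push_neg at hji
          have := Fin.le_def.mp ((S.orderEmbOfFin hS).monotone hji)
          omega
        · intro hj
          exact Fin.lt_def.mp ((S.orderEmbOfFin hS).strictMono hj)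
      rw [he, Fin.card_Iio]
    have h2 : (i : ℕ) + 1 ≤ cnt T t := by
      rw [cnt_eq T hT t]
      have hsub : Finset.Iic i ⊆
          Finset.univ.filter (fun j : Fin k => ((T.orderEmbOfFin hT j : Fin n) : ℕ) < t) := by
        intro j hj
        rw [Finset.mem_Iic] at hj
        simp only [Finset.mem_filter, Finset.mem_univ, true_and]
        calc ((T.orderEmbOfFin hT j : Fin n) : ℕ)
            ≤ ((T.orderEmbOfFin hT i : Fin n) : ℕ) :=
              Fin.le_def.mp ((T.orderEmbOfFin hT).monotone hj)
          _ < t := Fin.lt_def.mp hlt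
      calc (i : ℕ) + 1 = (Finset.Iic i).card := (Fin.card_Iic i).symm
        _ ≤ _ := Finset.card_le_card hsub
    have := hc t
    omega

lemma cnt_insert (S : Finset (Fin n)) {y : Fin n} (hy : y ∉ S) (t : ℕ) :
    cnt (insert y S) t = cnt S t + (if (y : ℕ) < t then 1 else 0) := by
  unfold cnt
  rw [Finset.filter_insert]
  split_ifs with h
  · rw [Finset.card_insert_of_notMem (fun h => hy (Finset.mem_of_mem_filter _ h))]
  · omega

lemma cnt_erase (S : Finset (Fin n)) {x : Fin n} (hx : x ∈ S) (t : ℕ) :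
    cnt (S.erase x) t + (if (x : ℕ) < t then 1 else 0) = cnt S t := by
  unfold cnt
  rw [Finset.filter_erase]
  split_ifs with h
  · rw [Finset.card_erase_of_mem (Finset.mem_filter.2 ⟨hx, h⟩)]
    have : 1 ≤ (S.filter (fun z : Fin n => (z : ℕ) < t)).card :=
      Finset.card_pos.2 ⟨x, Finset.mem_filter.2 ⟨hx, h⟩⟩
    omega
  · rw [Finset.erase_eq_of_notMem]
    · omega
    · intro hmem
      exact h (Finset.mem_filter.1 hmem).2

lemma cnt_split (S : Finset (Fin n)) {a b : ℕ} (hab : a ≤ b) :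
    cnt S b = cnt S a + (S.filter (fun z : Fin n => a ≤ (z : ℕ) ∧ (z : ℕ) < b)).card := by
  unfold cnt
  rw [← Finset.card_union_of_disjoint]
  · congr 1
    ext z
    simp only [Finset.mem_union, Finset.mem_filter]
    constructor
    · intro ⟨h1, h2⟩
      by_cases hz : (z : ℕ) < a
      · exact Or.inl ⟨h1, hz⟩
      · exact Or.inr ⟨h1, by omega, h2⟩
    · rintro (⟨h1, h2⟩ | ⟨h1, h2, h3⟩)
      · exact ⟨h1, by omega⟩
      · exact ⟨h1, h3⟩
  · rw [Finset.disjoint_left]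
    intro z h1 h2
    simp only [Finset.mem_filter] at h1 h2
    omega

end GaleAux

theorem gale_interval_is_matroid (n k : ℕ) (U L : Finset (Fin n))
    (hU : U.card = k) (hL : L.card = k) (hUL : GaleLE U L hU hL) :
    (∃ B : Finset (Fin n), ∃ hB : B.card = k, GaleLE U B hU hB ∧ GaleLE B L hB hL) ∧
    (∀ B₁ B₂ : Finset (Fin n), ∀ hB₁ : B₁.card = k, ∀ hB₂ : B₂.card = k,
      GaleLE U B₁ hU hB₁ → GaleLE B₁ L hB₁ hL →
      GaleLE U B₂ hU hB₂ → GaleLE B₂ L hB₂ hL →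
      ∀ x ∈ B₁ \ B₂, ∃ y ∈ B₂ \ B₁,
        ∃ hB : (insert y (B₁.erase x)).card = k,
          GaleLE U (insert y (B₁.erase x)) hU hB ∧
          GaleLE (insert y (B₁.erase x)) L hB hL) := by
  classical
  constructor
  · exact ⟨U, hU, fun i => le_refl _, hUL⟩
  · intro B₁ B₂ hB₁ hB₂ hU1 hL1 hU2 hL2 x hx
    rw [Finset.mem_sdiff] at hx
    obtain ⟨hx1, hx2⟩ := hx
    rw [GaleAux.galeLE_iff] at hU1 hL1 hU2 hL2
    obtain ⟨a, hax', haeq, hamax⟩ :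
        ∃ a, a < x.val + 1 ∧ GaleAux.cnt B₁ a = GaleAux.cnt U a ∧
          ∀ t, t < x.val + 1 → GaleAux.cnt B₁ t = GaleAux.cnt U t → t ≤ a := by
      have hAne : ((Finset.range (x.val + 1)).filter
          (fun t => GaleAux.cnt B₁ t = GaleAux.cnt U t)).Nonempty :=
        ⟨0, Finset.mem_filter.2 ⟨Finset.mem_range.2 (by omega), by
          rw [GaleAux.cnt_zero, GaleAux.cnt_zero]⟩⟩
      have h := Finset.max'_mem _ hAne
      rw [Finset.mem_filter, Finset.mem_range] at h
      refine ⟨Finset.max' _ hAne, h.1, h.2, ?_⟩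
      intro t h1 h2
      exact Finset.le_max' ((Finset.range (x.val + 1)).filter
        (fun s => GaleAux.cnt B₁ s = GaleAux.cnt U s)) t
        (Finset.mem_filter.2 ⟨Finset.mem_range.2 h1, h2⟩)
    have hax : a ≤ x.val := by omega
    obtain ⟨b, hxb', hbn, hbeq, hbmin⟩ :
        ∃ b, x.val + 1 ≤ b ∧ b ≤ n ∧ GaleAux.cnt B₁ b = GaleAux.cnt L b ∧
          ∀ t, x.val + 1 ≤ t → t ≤ n → GaleAux.cnt B₁ t = GaleAux.cnt L t → b ≤ t := by
      have hCne : ((Finset.Icc (x.val + 1) n).filter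
          (fun t => GaleAux.cnt B₁ t = GaleAux.cnt L t)).Nonempty :=
        ⟨n, Finset.mem_filter.2 ⟨Finset.mem_Icc.2 ⟨by have := x.isLt; omega, le_refl n⟩, by
          rw [GaleAux.cnt_top, GaleAux.cnt_top, hB₁, hL]⟩⟩
      have h := Finset.min'_mem _ hCne
      rw [Finset.mem_filter, Finset.mem_Icc] at h
      refine ⟨Finset.min' _ hCne, h.1.1, h.1.2, h.2, ?_⟩
      intro t h1 h2 h3
      exact Finset.min'_le ((Finset.Icc (x.val + 1) n).filter
        (fun s => GaleAux.cnt B₁ s = GaleAux.cnt L s)) t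
        (Finset.mem_filter.2 ⟨Finset.mem_Icc.2 ⟨h1, h2⟩, h3⟩)
    have hxb : x.val < b := by omega
    -- the segment [a, b)
    have hab : a ≤ b := by omega
    have hsplit1 := GaleAux.cnt_split B₁ hab
    have hsplit2 := GaleAux.cnt_split B₂ hab
    have hxseg : x ∈ B₁.filter (fun z : Fin n => a ≤ (z : ℕ) ∧ (z : ℕ) < b) :=
      Finset.mem_filter.2 ⟨hx1, hax, hxb⟩
    have hcard : (B₁.filter (fun z : Fin n => a ≤ (z : ℕ) ∧ (z : ℕ) < b)).card
        ≤ (B₂.filter (fun z : Fin n => a ≤ (z : ℕ) ∧ (z : ℕ) < b)).card := by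
      have h1 := hU2 a
      have h2 := hL2 b
      have h3 := hL1 b
      omega
    have hex : ((B₂.filter (fun z : Fin n => a ≤ (z : ℕ) ∧ (z : ℕ) < b)) \ B₁).Nonempty := by
      by_contra hemp
      rw [Finset.not_nonempty_iff_eq_empty, Finset.sdiff_eq_empty_iff_subset] at hemp
      have hsub : B₂.filter (fun z : Fin n => a ≤ (z : ℕ) ∧ (z : ℕ) < b)
          ⊆ (B₁.filter (fun z : Fin n => a ≤ (z : ℕ) ∧ (z : ℕ) < b)).erase x := by
        intro z hz
        have hz' := Finset.mem_filter.1 hz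
        refine Finset.mem_erase.2 ⟨?_, Finset.mem_filter.2 ⟨hemp hz, hz'.2⟩⟩
        rintro rfl
        exact hx2 hz'.1
      have hle := Finset.card_le_card hsub
      rw [Finset.card_erase_of_mem hxseg] at hle
      have hpos : 1 ≤ (B₁.filter (fun z : Fin n => a ≤ (z : ℕ) ∧ (z : ℕ) < b)).card :=
        Finset.card_pos.2 ⟨x, hxseg⟩
      omega
    obtain ⟨y, hy⟩ := hex
    rw [Finset.mem_sdiff] at hy
    obtain ⟨hyseg, hyB1⟩ := hy
    obtain ⟨hyB2, hay, hyb⟩ := Finset.mem_filter.1 hyseg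
    have hynotE : y ∉ B₁.erase x := fun h => hyB1 (Finset.mem_of_mem_erase h)
    have hcardB' : (insert y (B₁.erase x)).card = k := by
      rw [Finset.card_insert_of_notMem hynotE, Finset.card_erase_of_mem hx1, hB₁]
      have h1 : 1 ≤ k := hB₁ ▸ Finset.card_pos.2 ⟨x, hx1⟩
      omega
    have hkey : ∀ t, GaleAux.cnt (insert y (B₁.erase x)) t + (if (x : ℕ) < t then 1 else 0)
        = GaleAux.cnt B₁ t + (if (y : ℕ) < t then 1 else 0) := by
      intro t
      rw [GaleAux.cnt_insert _ hynotE t]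
      have := GaleAux.cnt_erase B₁ hx1 t
      omega
    have hstrictU : ∀ t, (y : ℕ) < t → t ≤ (x : ℕ) → GaleAux.cnt B₁ t < GaleAux.cnt U t := by
      intro t h1 h2
      have hne : GaleAux.cnt B₁ t ≠ GaleAux.cnt U t := by
        intro he
        have := hamax t (by omega) he
        omega
      have := hU1 t
      omega
    have hstrictL : ∀ t, (x : ℕ) < t → t ≤ (y : ℕ) → GaleAux.cnt L t < GaleAux.cnt B₁ t := by
      intro t h1 h2
      have hne : GaleAux.cnt B₁ t ≠ GaleAux.cnt L t := by
        intro he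
        have hyn := y.isLt
        have := hbmin t (by omega) (by omega) he
        omega
      have := hL1 t
      omega
    refine ⟨y, Finset.mem_sdiff.2 ⟨hyB2, hyB1⟩, hcardB', ?_, ?_⟩
    · rw [GaleAux.galeLE_iff]
      intro t
      have hk := hkey t
      have hu := hU1 t
      split_ifs at hk with hxt hyt hyt
      · omega
      · omega
      · have := hstrictU t hyt (by omega)
        omega
      · omega
    · rw [GaleAux.galeLE_iff]
      intro t
      have hk := hkey t
      have hl := hL1 t
      split_ifs at hk with hxt hyt hyt
      · omega
      · have := hstrictL t hxt (by omega)
        omega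
      · omega
      · omega
end

section
/- Let H be the hyperplane x_1 = r in R^n with 2 ≤ r ≤ n-1. Then for every permutation σ ∈ S_n viewed as the point (σ(1),...,σ(n)): σ lies in the halfspace {x_1 ≤ r} if and only if σ ≤ r·ω_r in the Bruhat order, where r·ω_r denotes the permutation with one-line notation r, n, n-1, ..., r+1, r-1, ..., 2, 1 (r first, then all other values in decreasing order). -/
/-- Number of inversions (Coxeter length) of a permutation of `Fin n`. -/
def invCount {n : ℕ} (σ : Equiv.Perm (Fin n)) : ℕ :=
  ((Finset.univ : Finset (Fin n × Fin n)).filter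
    (fun p => p.1 < p.2 ∧ σ p.2 < σ p.1)).card

/-- Covering relation of the strong Bruhat order: multiply by a transposition
(on values) and increase the length by exactly one. -/
def BruhatCover {n : ℕ} (u v : Equiv.Perm (Fin n)) : Prop :=
  (∃ a b : Fin n, a ≠ b ∧ v = Equiv.swap a b * u) ∧ invCount v = invCount u + 1

/-- The strong Bruhat order on `Equiv.Perm (Fin n)`. -/
def BruhatLE {n : ℕ} : Equiv.Perm (Fin n) → Equiv.Perm (Fin n) → Prop :=
  Relation.ReflTransGen BruhatCover

/-- Sum of the first `j` one-line values of `σ` (values taken in `{1, …, n}`). -/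
def firstSum {n : ℕ} (σ : Equiv.Perm (Fin n)) (j : ℕ) : ℕ :=
  ∑ i ∈ Finset.univ.filter (fun i : Fin n => (i : ℕ) < j), ((σ i : ℕ) + 1)

/-!
Write `u ⋖ v` for a Bruhat cover. Every cover has the form `v = u (p q)` with `p < q`, and the
classical length formula `ℓ(u (p q)) = ℓ(u) + 1 + 2 #{p < j < q | u p < u j < u q}` for
`u p < u q` shows that then necessarily `u p < u q`: otherwise `u` would be longer than `v`.
Hence a cover never decreases the first entry, and neither does the Bruhat order.

Conversely, let `w` have a strictly decreasing tail `w 1 > ⋯ > w (n-1)` (as `rω_r` does) and let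
`σ 0 ≤ w 0`, `σ ≠ w`. If `σ 0 < w 0`, exchanging the entry `σ 0` with the entry `σ 0 + 1` is a
cover; if `σ 0 = w 0`, the tail of `σ` is not decreasing (a decreasing tail is determined by
its set of values), and exchanging an adjacent ascent in it is a cover. Both keep the first entry
at most `w 0`, and since lengths are bounded the resulting chain of covers ends at `w`.
-/

open Equiv Finset

section Inversions

variable {n : ℕ}

def invSet (σ : Perm (Fin n)) : Finset (Fin n × Fin n) :=
  univ.filter fun x => x.1 < x.2 ∧ σ x.2 < σ x.1

lemma mem_invSet {σ : Perm (Fin n)} {x : Fin n × Fin n} :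
    x ∈ invSet σ ↔ x.1 < x.2 ∧ σ x.2 < σ x.1 := by
  simp [invSet]

lemma card_invSet (σ : Perm (Fin n)) : #(invSet σ) = invCount σ := rfl

lemma invCount_le (σ : Perm (Fin n)) : invCount σ ≤ n * n :=
  (card_filter_le _ _).trans (by simp)

/-- Through `(i, j) ↦ (v i, v j)` (reordered when `v` inverts `(i, j)`), the inversions of
`u * v` correspond to the symmetric difference of the inversions of `u` and of `v⁻¹`. -/
lemma invCount_mul_add_card_inter (u v : Perm (Fin n)) :
    invCount (u * v) + 2 * #(invSet u ∩ invSet v⁻¹) = invCount u + invCount v⁻¹ := by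
  have hsdiff : #(invSet (u * v) \ invSet v) = #(invSet u \ invSet v⁻¹) := by
    refine card_nbij' (fun x => (v x.1, v x.2)) (fun x => (v⁻¹ x.1, v⁻¹ x.2)) ?_ ?_ ?_ ?_ <;>
      intro x <;>
      simp only [coe_sdiff, Set.mem_sdiff, mem_coe, mem_invSet, Perm.mul_apply, Perm.coe_inv,
        symm_apply_apply, apply_symm_apply] <;>
      grind [Equiv.apply_eq_iff_eq]
  have hinter : #(invSet (u * v) ∩ invSet v) = #(invSet v⁻¹ \ invSet u) := by
    refine card_nbij' (fun x => (v x.2, v x.1)) (fun x => (v⁻¹ x.2, v⁻¹ x.1)) ?_ ?_ ?_ ?_ <;>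
      intro x <;>
      simp only [coe_sdiff, coe_inter, Set.mem_sdiff, Set.mem_inter_iff, mem_coe, mem_invSet,
        Perm.mul_apply, Perm.coe_inv, symm_apply_apply, apply_symm_apply] <;>
      grind [Equiv.apply_eq_iff_eq]
  rw [← card_invSet, ← card_invSet, ← card_invSet,
    ← card_inter_add_card_sdiff (invSet (u * v)) (invSet v),
    ← card_inter_add_card_sdiff (invSet u) (invSet v⁻¹),
    ← card_inter_add_card_sdiff (invSet v⁻¹) (invSet u), inter_comm (invSet v⁻¹)]
  omega

end Inversions

section Transpositions

variable {n : ℕ} {u v : Perm (Fin n)} {p q : Fin n}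

lemma mem_invSet_swap (hpq : p < q) {x : Fin n × Fin n} :
    x ∈ invSet (swap p q) ↔
      x = (p, q) ∨ (x.1 = p ∧ x.2 ∈ Ioo p q) ∨ (x.1 ∈ Ioo p q ∧ x.2 = q) := by
  obtain ⟨i, j⟩ := x
  simp only [mem_invSet, mem_Ioo, Prod.mk.injEq, swap_apply_def]
  split_ifs <;> simp only [Fin.lt_def, Fin.ext_iff] at * <;> omega

lemma invCount_swap (hpq : p < q) : invCount (swap p q) = 2 * #(Ioo p q) + 1 := by
  have hdisj : Disjoint ((Ioo p q).image (p, ·)) ((Ioo p q).image (·, q)) := by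
    simp only [disjoint_left, mem_image, mem_Ioo]
    rintro _ ⟨j, hj, rfl⟩ ⟨k, hk, hkj⟩
    simp_all
  have hmem : (p, q) ∉ (Ioo p q).image (p, ·) ∪ (Ioo p q).image (·, q) := by
    simp
  have heq : invSet (swap p q) =
      insert (p, q) ((Ioo p q).image (p, ·) ∪ (Ioo p q).image (·, q)) := by
    ext x
    rw [mem_invSet_swap hpq]
    aesop
  rw [← card_invSet, heq, card_insert_of_notMem hmem, card_union_of_disjoint hdisj,
    card_image_of_injective _ (Prod.mk_right_injective p),
    card_image_of_injective _ (Prod.mk_left_injective q)]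
  ring

lemma card_invSet_inter_invSet_swap (hpq : p < q) (hu : u p < u q) :
    #(invSet u ∩ invSet (swap p q)) = #{j ∈ Ioo p q | u j < u p ∨ u q < u j} := by
  have hmem : ∀ x, x ∈ invSet u ∩ invSet (swap p q) ↔
      (x.1 = p ∧ x.2 ∈ Ioo p q ∧ u x.2 < u p) ∨ (x.1 ∈ Ioo p q ∧ x.2 = q ∧ u q < u x.1) := by
    rintro ⟨i, j⟩
    rw [mem_inter, mem_invSet_swap hpq, mem_invSet]
    constructor
    · rintro ⟨⟨hij, hinv⟩, h | ⟨rfl, hj⟩ | ⟨hi, rfl⟩⟩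
      · obtain ⟨rfl, rfl⟩ := Prod.mk.inj h
        exact absurd hinv hu.not_gt
      · exact Or.inl ⟨rfl, hj, hinv⟩
      · exact Or.inr ⟨hi, rfl, hinv⟩
    · rintro (⟨rfl, hj, hinv⟩ | ⟨hi, rfl, hinv⟩)
      · exact ⟨⟨(mem_Ioo.1 hj).1, hinv⟩, Or.inr (Or.inl ⟨rfl, hj⟩)⟩
      · exact ⟨⟨(mem_Ioo.1 hi).2, hinv⟩, Or.inr (Or.inr ⟨hi, rfl⟩)⟩
  symm
  refine card_nbij' (fun j => if u j < u p then (p, j) else (j, q))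
    (fun x => if x.1 = p then x.2 else x.1) ?_ ?_ ?_ ?_
  all_goals intro x; simp only [coe_filter, mem_coe, hmem]
  all_goals grind

theorem invCount_mul_swap (hpq : p < q) (hu : u p < u q) :
    invCount (u * swap p q) = invCount u + 2 * #{j ∈ Ioo p q | u p < u j ∧ u j < u q} + 1 := by
  have hsplit := card_filter_add_card_filter_not (s := Ioo p q)
    (fun j => u j < u p ∨ u q < u j)
  have hbetween : {j ∈ Ioo p q | ¬(u j < u p ∨ u q < u j)} =
      {j ∈ Ioo p q | u p < u j ∧ u j < u q} := by
    refine filter_congr fun j hj => ?_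
    have hpj : u p ≠ u j := u.injective.ne (mem_Ioo.1 hj).1.ne
    have hjq : u j ≠ u q := u.injective.ne (mem_Ioo.1 hj).2.ne
    grind
  rw [hbetween] at hsplit
  have := invCount_mul_add_card_inter u (swap p q)
  rw [swap_inv, card_invSet_inter_invSet_swap hpq hu, invCount_swap hpq] at this
  omega

lemma invCount_mul_swap_lt (hpq : p < q) (hu : u q < u p) :
    invCount (u * swap p q) < invCount u := by
  have := invCount_mul_swap (u := u * swap p q) hpq (by simpa)
  rw [mul_assoc, swap_mul_self, mul_one] at this
  omega

lemma bruhatCover_mul_swap (hpq : p < q) (hu : u p < u q)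
    (hmid : ∀ j ∈ Ioo p q, ¬(u p < u j ∧ u j < u q)) : BruhatCover u (u * swap p q) :=
  ⟨⟨u p, u q, hu.ne, mul_swap_eq_swap_mul u p q⟩, by
    rw [invCount_mul_swap hpq hu, filter_false_of_mem hmid, card_empty, mul_zero, add_zero]⟩

lemma BruhatCover.exists_mul_swap (h : BruhatCover u v) :
    ∃ p q, p < q ∧ u p < u q ∧ v = u * swap p q := by
  suffices hval : ∀ p q, p < q → v = u * swap p q → u p < u q by
    obtain ⟨⟨a, b, hab, hv⟩, -⟩ := h
    rw [swap_mul_eq_mul_swap] at hv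
    rcases lt_or_gt_of_ne (u⁻¹.injective.ne hab) with hlt | hlt
    · exact ⟨_, _, hlt, hval _ _ hlt hv, hv⟩
    · rw [swap_comm] at hv
      exact ⟨_, _, hlt, hval _ _ hlt hv, hv⟩
  rintro p q hpq rfl
  by_contra! hle
  have := invCount_mul_swap_lt hpq (hle.lt_of_ne (u.injective.ne hpq.ne'))
  have := h.2
  omega

theorem bruhatLE_of_exists_bruhatCover {P : Perm (Fin n) → Prop} {w : Perm (Fin n)}
    (step : ∀ σ, P σ → σ ≠ w → ∃ τ, BruhatCover σ τ ∧ P τ) {σ : Perm (Fin n)} (hσ : P σ) :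
    BruhatLE σ w := by
  induction hk : n * n - invCount σ using Nat.strong_induction_on generalizing σ with
  | _ k ih =>
    obtain rfl | hne := eq_or_ne σ w
    · exact .refl
    obtain ⟨τ, hcov, hτ⟩ := step σ hσ hne
    have := invCount_le τ
    have := hcov.2
    exact .head hcov (ih _ (by omega) hτ rfl)

end Transpositions

section FirstEntry

variable {m : ℕ} {u v σ w : Perm (Fin (m + 1))}

lemma BruhatCover.apply_zero_le (h : BruhatCover u v) : u 0 ≤ v 0 := by
  obtain ⟨p, q, hpq, hu, rfl⟩ := h.exists_mul_swap
  have hq : q ≠ 0 := ((Fin.zero_le p).trans_lt hpq).ne'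
  obtain rfl | hp := eq_or_ne p 0
  · simpa using hu.le
  · simp [swap_apply_of_ne_of_ne hp.symm hq.symm]

lemma BruhatLE.apply_zero_le (h : BruhatLE u v) : u 0 ≤ v 0 := by
  induction h with
  | refl => rfl
  | tail _ hcov ih => exact ih.trans hcov.apply_zero_le

lemma eq_of_apply_zero_eq_of_strictAnti (h0 : σ 0 = w 0) (hσ : StrictAnti (σ ∘ Fin.succ))
    (hw : StrictAnti (w ∘ Fin.succ)) : σ = w := by
  have hrange (π : Perm (Fin (m + 1))) : Set.range (π ∘ Fin.succ) = {π 0}ᶜ := by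
    rw [Set.range_comp, Fin.range_succ, π.image_compl, Set.image_singleton]
  have htail := (hσ.range_inj hw).1 (by rw [hrange, hrange, h0])
  exact Equiv.ext (Fin.cases h0 (congrFun htail))

lemma bruhatCover_mul_swap_castSucc_succ {i : Fin m} (hu : u i.castSucc < u i.succ) :
    BruhatCover u (u * swap i.castSucc i.succ) :=
  bruhatCover_mul_swap Fin.castSucc_lt_succ hu fun j hj => by
    simp only [mem_Ioo, Fin.lt_def, Fin.val_castSucc, Fin.val_succ] at hj
    omega

lemma exists_bruhatCover_apply_zero_le (hw : StrictAnti (w ∘ Fin.succ)) (h0 : σ 0 ≤ w 0)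
    (hne : σ ≠ w) : ∃ τ, BruhatCover σ τ ∧ τ 0 ≤ w 0 := by
  obtain hlt | heq := h0.lt_or_eq
  · have hlt' : (σ 0 : ℕ) < w 0 := hlt
    obtain ⟨q, hq⟩ : ∃ q, (σ q : ℕ) = σ 0 + 1 := ⟨σ⁻¹ ⟨σ 0 + 1, by omega⟩, by simp⟩
    have hq0 : 0 < q := Fin.pos_iff_ne_zero.2 fun h => by rw [h] at hq; omega
    refine ⟨σ * swap 0 q, bruhatCover_mul_swap hq0 ?_ fun j _ => ?_, ?_⟩
    · rw [Fin.lt_def]; omega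
    · rw [Fin.lt_def, Fin.lt_def]; omega
    · rw [Perm.mul_apply, swap_apply_left, Fin.le_def]; omega
  · have hσ : ¬StrictAnti (σ ∘ Fin.succ) := fun hσ =>
      hne (eq_of_apply_zero_eq_of_strictAnti heq hσ hw)
    obtain ⟨k, rfl⟩ : ∃ k, m = k + 1 :=
      Nat.exists_eq_succ_of_ne_zero (by rintro rfl; exact hσ (Subsingleton.strictAnti _))
    obtain ⟨i, hi⟩ := not_forall.1 (mt Fin.strictAnti_iff_succ_lt.2 hσ)
    rw [Function.comp_apply, Function.comp_apply, not_lt, Fin.succ_castSucc] at hi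
    refine ⟨σ * swap i.succ.castSucc i.succ.succ, bruhatCover_mul_swap_castSucc_succ
      (hi.lt_of_ne (σ.injective.ne Fin.castSucc_lt_succ.ne)), ?_⟩
    rw [Perm.mul_apply, swap_apply_of_ne_of_ne (Fin.castSucc_ne_zero_iff.2 i.succ_ne_zero).symm
      i.succ.succ_ne_zero.symm, heq]

theorem bruhatLE_iff_apply_zero_le (hw : StrictAnti (w ∘ Fin.succ)) :
    BruhatLE σ w ↔ σ 0 ≤ w 0 :=
  ⟨BruhatLE.apply_zero_le,
    bruhatLE_of_exists_bruhatCover (P := fun τ => τ 0 ≤ w 0)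
      fun _ h0 hne => exists_bruhatCover_apply_zero_le hw h0 hne⟩

end FirstEntry

theorem halfspace_iff_bruhat_le_rOmega (n r : ℕ) (hr : 2 ≤ r) (hrn : r + 1 ≤ n)
    (rω : Equiv.Perm (Fin n))
    (hrω : ∀ i : Fin n, (rω i : ℕ) =
      if (i : ℕ) = 0 then r - 1
      else if (i : ℕ) ≤ n - r then n - (i : ℕ)
      else n - (i : ℕ) - 1)
    (σ : Equiv.Perm (Fin n)) :
    (σ ⟨0, by omega⟩ : ℕ) + 1 ≤ r ↔ BruhatLE σ rω := by
  obtain ⟨m, rfl⟩ : ∃ m, n = m + 1 := ⟨n - 1, by omega⟩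
  have h0 : (rω 0 : ℕ) = r - 1 := by simpa using hrω 0
  have htail : StrictAnti (rω ∘ Fin.succ) := fun i j hij => by
    have hij : (i : ℕ) < j := hij
    have hj : (j : ℕ) < m := j.isLt
    rw [Function.comp_apply, Function.comp_apply, Fin.lt_def, hrω, hrω]
    simp only [Fin.val_succ, Nat.add_one_ne_zero, if_false]
    split_ifs <;> omega
  rw [Fin.zero_eta, bruhatLE_iff_apply_zero_le htail, Fin.le_def, h0]
  omega
end

section
/- Fix 1 ≤ j ≤ n-2 and let A = [j-1] ∪ {j+1} = {1,...,j-1,j+1}. Every permutation σ ∈ S_n with σ(1)+...+σ(j) ≥ binom(j+1,2)+1 satisfies →A·e_A ≤ σ in the Bruhat order, where →A·e_A is the permutation whose one-line notation is 1,2,...,j-1,j+1 followed by j and then j+2,...,n. -/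
/-!
The sum of the first `j` values exceeds its minimum `binom(j+1, 2)` exactly when `σ` does not map
the first `j` positions into the first `j` values. This property can be pushed down along Bruhat
covers until `s_j = →A·e_A` is reached. If `σ` is not increasing on one of the two blocks of
positions `[0, j)` and `[j, n)`, undo an inversion inside that block whose rectangle is empty: it
is a cover and it does not change the set of values on the first block. If `σ` is increasing on
both blocks, some value `k + 1` sits in the first block and `k` in the second; exchanging them is a
cover, and the property is lost only when the result is the identity, i.e. when `σ = s_j`.
-/

open Equiv Finset

namespace Equiv.Perm

variable {n : ℕ}

theorem invCount_eq_invCount_mul_swap_add_one (σ : Perm (Fin n)) {q p : Fin n} (hqp : q < p)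
    (hval : σ p < σ q) (hmid : ∀ r, q < r → r < p → σ r < σ p ∨ σ q < σ r) :
    invCount σ = invCount (σ * swap q p) + 1 := by
  set s := swap q p
  set A := Finset.univ.filter fun z : Fin n × Fin n => z.1 < z.2 ∧ σ z.2 < σ z.1
  set B := Finset.univ.filter fun z : Fin n × Fin n => s z.1 < s z.2 ∧ σ z.2 < σ z.1
  have hA : invCount σ = #A := rfl
  have hB : invCount (σ * s) = #B := by
    unfold invCount
    refine card_equiv (s.prodCongr s) fun z => ?_
    rw [Finset.mem_filter]
    simp [B, s]
  -- apart from `(q, p)`, `s × s` exchanges the pairs inverted by `σ` only and by `σ * s` only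
  have hsdiff : #((A \ B).erase (q, p)) = #(B \ A) := by
    refine card_equiv (s.prodCongr s) fun ⟨x, y⟩ => ?_
    have := hmid x; have := hmid y
    simp only [mem_erase, Finset.mem_sdiff, mem_filter, Finset.mem_univ, true_and,
      prodCongr_apply, Prod.map, swap_apply_self, s, ne_eq, Prod.mk.injEq, A, B]
    simp only [swap_apply_def]
    split_ifs <;> grind
  have hqp_mem : (q, p) ∈ A \ B := by simp [A, B, s, hqp, hval, hqp.not_gt]
  have hAB := card_sdiff_add_card_inter A B
  have hBA := card_sdiff_add_card_inter B A
  rw [← card_erase_add_one hqp_mem, hsdiff] at hAB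
  rw [Finset.inter_comm] at hBA
  omega

theorem bruhatCover_mul_swap (σ : Perm (Fin n)) {q p : Fin n} (hqp : q < p) (hval : σ p < σ q)
    (hmid : ∀ r, q < r → r < p → σ r < σ p ∨ σ q < σ r) : BruhatCover (σ * swap q p) σ :=
  ⟨⟨σ q, σ p, hval.ne', by rw [mul_swap_eq_swap_mul, swap_mul_self_mul]⟩,
    invCount_eq_invCount_mul_swap_add_one σ hqp hval hmid⟩

theorem exists_empty_inversion (σ : Perm (Fin n)) {x y : Fin n} (hxy : x < y) (hσ : σ y < σ x) :
    ∃ q p, x ≤ q ∧ q < p ∧ p ≤ y ∧ σ p < σ q ∧ ∀ r, q < r → r < p → σ r < σ p ∨ σ q < σ r := by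
  induction h : (y : ℕ) - x using Nat.strong_induction_on generalizing y with
  | _ d ih =>
  by_cases hmid : ∀ r, x < r → r < y → σ r < σ y ∨ σ x < σ r
  · exact ⟨x, y, le_rfl, hxy, le_rfl, hσ, hmid⟩
  push Not at hmid
  obtain ⟨r, hxr, hry, -, hrx⟩ := hmid
  have hrx : σ r < σ x := hrx.lt_of_ne (σ.injective.ne hxr.ne')
  have hd : (r : ℕ) - x < d := by rw [← h]; rw [Fin.lt_def] at hxr hry; omega
  obtain ⟨q, p, hxq, hqp, hpr, hpq, hrect⟩ := ih _ hd hxr hrx rfl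
  exact ⟨q, p, hxq, hqp, hpr.trans hry.le, hpq, hrect⟩

theorem exists_bruhatCover_of_not_strictMonoOn (σ : Perm (Fin n)) {A : Set (Fin n)}
    [A.OrdConnected] (h : ¬ StrictMonoOn σ A) : ∃ q ∈ A, ∃ p ∈ A, BruhatCover (σ * swap q p) σ := by
  simp only [StrictMonoOn, not_forall] at h
  obtain ⟨x, hx, y, hy, hxy, hσ⟩ := h
  obtain ⟨q, p, hxq, hqp, hpy, hpq, hrect⟩ :=
    exists_empty_inversion σ hxy ((not_lt.1 hσ).lt_of_ne (σ.injective.ne hxy.ne'))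
  exact ⟨q, Set.OrdConnected.out ‹_› hx hy ⟨hxq, hqp.le.trans hpy⟩,
    p, Set.OrdConnected.out ‹_› hx hy ⟨hxq.trans hqp.le, hpy⟩, bruhatCover_mul_swap σ hqp hpq hrect⟩

theorem mapsTo_of_mapsTo_mul_swap {α : Type*} [DecidableEq α] {σ : Perm α} {I : Set α}
    {q p : α} (hqp : q ∈ I ↔ p ∈ I) (h : Set.MapsTo (σ * swap q p) I I) : Set.MapsTo σ I I := by
  intro x hx
  have hsx : swap q p x ∈ I := by
    rw [swap_apply_def]; split_ifs <;> simp_all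
  simpa using h hsx

theorem strictMonoOn_mul_swap_of_val_eq_succ {σ : Perm (Fin n)} {A : Set (Fin n)}
    (h : StrictMonoOn σ A) {q p : Fin n} (hqp : (σ q : ℕ) = σ p + 1) (hA : q ∉ A ∨ p ∉ A) :
    StrictMonoOn (σ * swap q p) A := by
  intro x hx y hy hxy
  have hσ := h hx hy hxy
  have hxp : σ x ≠ σ p ∨ x = p := (eq_or_ne x p).symm.imp_left (σ.injective.ne)
  have hyq : σ y ≠ σ q ∨ y = q := (eq_or_ne y q).symm.imp_left (σ.injective.ne)
  simp only [mul_apply, swap_apply_def]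
  rw [Fin.lt_def] at hσ ⊢
  simp only [ne_eq, Fin.ext_iff] at hxp hyq
  split_ifs <;> grind

theorem exists_val_eq_succ_of_not_mapsTo {σ : Perm (Fin n)} {b : Fin n}
    (h : ¬ Set.MapsTo σ (Set.Iio b) (Set.Iio b)) :
    ∃ q p, q < b ∧ b ≤ p ∧ (σ q : ℕ) = σ p + 1 := by
  by_contra! H
  -- otherwise the set of values taken on `Iio b` would be closed downwards
  have hdown : ∀ d k : ℕ, (∃ q < b, (σ q : ℕ) = k + d) → ∃ q < b, (σ q : ℕ) = k := by
    intro d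
    induction d with
    | zero => simp
    | succ d ih =>
      rintro k ⟨q, hq, hqk⟩
      have hk : k + d < n := by omega
      refine ih k ⟨σ.symm ⟨k + d, hk⟩, ?_, by simp⟩
      by_contra! hle
      exact H q _ hq hle (by simp; omega)
  obtain ⟨x, hx, hσx⟩ : ∃ x < b, b ≤ σ x := by simpa [Set.MapsTo] using h
  have hsub : Finset.Iic b ⊆ (Finset.Iio b).image σ := by
    intro k hk
    rw [Finset.mem_Iic, Fin.le_def] at hk
    rw [Fin.le_def] at hσx
    obtain ⟨q, hq, hqk⟩ := hdown (σ x - k) k ⟨x, hx, by omega⟩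
    exact mem_image.2 ⟨q, Finset.mem_Iio.2 hq, Fin.ext hqk⟩
  have := (card_le_card hsub).trans card_image_le
  simp at this

theorem bijOn_of_mapsTo {α : Type*} {σ : Perm α} {s : Set α} (hs : s.Finite)
    (h : Set.MapsTo σ s s) : Set.BijOn σ s s :=
  (hs.injOn_iff_bijOn_of_mapsTo h).1 σ.injective.injOn

theorem eq_one_of_strictMonoOn_Iio_Ici {σ : Perm (Fin n)} {b : Fin n}
    (hmaps : Set.MapsTo σ (Set.Iio b) (Set.Iio b)) (hlo : StrictMonoOn σ (Set.Iio b))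
    (hhi : StrictMonoOn σ (Set.Ici b)) : σ = 1 := by
  have hmaps' : Set.MapsTo σ (Set.Ici b) (Set.Ici b) := by
    simpa using ((bijOn_of_mapsTo (Set.finite_Iio b) hmaps).surjOn.mapsTo_compl σ.injective)
  have hmono : StrictMono σ := by
    intro x y hxy
    rcases lt_or_ge y b with hy | hy
    · exact hlo (hxy.trans hy) hy hxy
    rcases lt_or_ge x b with hx | hx
    · exact (hmaps hx).trans_le (hmaps' hy)
    · exact hhi hx hy hxy
  ext x
  simp [hmono.apply_eq]

theorem firstSum_eq_of_mapsTo {σ : Perm (Fin n)} {b : Fin n}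
    (h : Set.MapsTo σ (Set.Iio b) (Set.Iio b)) : firstSum σ b = b * (b + 1) / 2 := by
  have hfilter : Finset.univ.filter (fun i : Fin n => (i : ℕ) < b) = Finset.Iio b := by
    ext; simp
  have hbij := bijOn_of_mapsTo (Set.finite_Iio b) h
  rw [← Finset.coe_Iio] at hbij
  calc firstSum σ b = ∑ i ∈ Finset.Iio b, ((i : ℕ) + 1) := by
        rw [firstSum, hfilter]
        exact Finset.sum_nbij σ hbij.mapsTo hbij.injOn hbij.surjOn fun _ _ => rfl
    _ = ∑ k ∈ Finset.Iio (b : ℕ), (k + 1) := by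
        rw [← Fin.map_valEmbedding_Iio, Finset.sum_map]
        rfl
    _ = ∑ k ∈ Finset.range (b + 1), k := by
        rw [Nat.Iio_eq_range, Finset.sum_range_succ', add_zero]
    _ = b * (b + 1) / 2 := by rw [Finset.sum_range_id, Nat.add_sub_cancel, mul_comm]

theorem exists_bruhatCover_of_not_mapsTo {a b : Fin n} (hab : (b : ℕ) = a + 1)
    {σ : Perm (Fin n)} (hσ : ¬ Set.MapsTo σ (Set.Iio b) (Set.Iio b)) (hne : σ ≠ swap a b) :
    ∃ v, BruhatCover v σ ∧ ¬ Set.MapsTo v (Set.Iio b) (Set.Iio b) := by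
  by_cases hlo : StrictMonoOn σ (Set.Iio b)
  swap
  · obtain ⟨q, hq, p, hp, hcov⟩ := exists_bruhatCover_of_not_strictMonoOn σ hlo
    exact ⟨_, hcov, fun h => hσ (mapsTo_of_mapsTo_mul_swap (iff_of_true hq hp) h)⟩
  by_cases hhi : StrictMonoOn σ (Set.Ici b)
  swap
  · obtain ⟨q, hq, p, hp, hcov⟩ := exists_bruhatCover_of_not_strictMonoOn σ hhi
    exact ⟨_, hcov, fun h => hσ (mapsTo_of_mapsTo_mul_swap
      (iff_of_false (Set.notMem_Iio.2 hq) (Set.notMem_Iio.2 hp)) h)⟩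
  obtain ⟨q, p, hqb, hbp, hqp⟩ := exists_val_eq_succ_of_not_mapsTo hσ
  have hpq : σ p < σ q := by rw [Fin.lt_def]; omega
  have hmid : ∀ r, q < r → r < p → σ r < σ p ∨ σ q < σ r := by
    intro r hqr hrp
    have hrq : (σ r : ℕ) ≠ σ q := Fin.val_ne_of_ne (σ.injective.ne hqr.ne')
    have hrp' : (σ r : ℕ) ≠ σ p := Fin.val_ne_of_ne (σ.injective.ne hrp.ne)
    simp only [Fin.lt_def]
    omega
  refine ⟨_, bruhatCover_mul_swap σ (hqb.trans_le hbp) hpq hmid, fun hmaps => hne ?_⟩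
  -- otherwise `σ * swap q p` is increasing on both blocks and preserves them, hence is `1`
  have hv : σ * swap q p = 1 := eq_one_of_strictMonoOn_Iio_Ici hmaps
    (strictMonoOn_mul_swap_of_val_eq_succ hlo hqp (Or.inr hbp.not_gt))
    (strictMonoOn_mul_swap_of_val_eq_succ hhi hqp (Or.inl hqb.not_ge))
  rw [mul_eq_one_iff_eq_inv, swap_inv] at hv
  rw [hv, swap_apply_left, swap_apply_right] at hqp
  rw [Fin.lt_def] at hqb
  rw [Fin.le_def] at hbp
  obtain rfl : q = a := Fin.ext (by omega)
  obtain rfl : p = b := Fin.ext (by omega)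
  exact hv

theorem bruhatLE_of_forall_exists_bruhatCover {P : Perm (Fin n) → Prop} {τ : Perm (Fin n)}
    (h : ∀ σ, P σ → σ ≠ τ → ∃ v, BruhatCover v σ ∧ P v) {σ : Perm (Fin n)} (hσ : P σ) :
    BruhatLE τ σ := by
  induction hk : invCount σ using Nat.strong_induction_on generalizing σ with
  | _ k ih =>
  by_cases hτ : σ = τ
  · exact hτ ▸ Relation.ReflTransGen.refl
  obtain ⟨v, hv, hPv⟩ := h σ hσ hτ
  exact (ih _ (by rw [← hk, hv.2]; omega) hPv rfl).tail hv

theorem swap_bruhatLE_of_not_mapsTo {a b : Fin n} (hab : (b : ℕ) = a + 1) {σ : Perm (Fin n)}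
    (hσ : ¬ Set.MapsTo σ (Set.Iio b) (Set.Iio b)) : BruhatLE (swap a b) σ :=
  bruhatLE_of_forall_exists_bruhatCover
    (fun _ hσ hne => exists_bruhatCover_of_not_mapsTo hab hσ hne) hσ

end Equiv.Perm

theorem min_perm_above_hyperplane (n j : ℕ) (hj : 1 ≤ j) (hjn : j + 2 ≤ n)
    (τmin : Equiv.Perm (Fin n))
    (hτmin : ∀ i : Fin n, (τmin i : ℕ) =
      if (i : ℕ) < j - 1 then (i : ℕ)
      else if (i : ℕ) = j - 1 then j
      else if (i : ℕ) = j then j - 1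
      else (i : ℕ))
    (σ : Equiv.Perm (Fin n)) (hσ : j * (j + 1) / 2 + 1 ≤ firstSum σ j) :
    BruhatLE τmin σ := by
  let a : Fin n := ⟨j - 1, by omega⟩
  let b : Fin n := ⟨j, by omega⟩
  have hτ : τmin = swap a b := by
    ext i
    rw [hτmin, swap_apply_def]
    split_ifs <;> simp only [a, b, Fin.ext_iff] at * <;> omega
  have hmaps : ¬ Set.MapsTo σ (Set.Iio b) (Set.Iio b) := fun h => by
    have : firstSum σ j = j * (j + 1) / 2 := Perm.firstSum_eq_of_mapsTo h
    omega
  exact hτ ▸ Perm.swap_bruhatLE_of_not_mapsTo (by simp [a, b]; omega) hmaps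
end

section
/- Let M = M[U,L] and M' = M[U',L'] be lattice path matroids on [n] with U' ⊆ U, |U'| = |U|-1, L' ⊆ L, |L'| = |L|-1, where the removed pair (u,ℓ) (u ∈ U\U', ℓ ∈ L\L') is a good pair, i.e., max{0, u_j - ℓ_i} ≤ j - i when u = u_j is the j-th smallest element of U and ℓ = ℓ_i the i-th smallest element of L. Then every basis B' of M' is contained in some basis B of M; in particular every basis of M' is independent in M. -/
private lemma sm_gap {k : ℕ} {f : Fin k → ℕ} (hf : StrictMono f) :
    ∀ (d : ℕ) (a b : Fin k), (b : ℕ) = (a : ℕ) + d → f a + d ≤ f b := by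
  intro d
  induction d with
  | zero =>
    intro a b h
    have : a = b := Fin.ext (by omega)
    subst this; omega
  | succ d ih =>
    intro a b h
    have hb' : (a : ℕ) + d < k := by have := b.isLt; omega
    have h1 := ih a ⟨(a : ℕ) + d, hb'⟩ rfl
    have h2 : f ⟨(a : ℕ) + d, hb'⟩ < f b := hf (by simp [Fin.lt_def]; omega)
    omega

private lemma orderEmbOfFin_erase {n k : ℕ} (S : Finset (Fin n)) (hS : S.card = k + 1)
    (j : Fin (k + 1)) (hS' : (S.erase (S.orderEmbOfFin hS j)).card = k) (m : Fin k) :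
    (S.erase (S.orderEmbOfFin hS j)).orderEmbOfFin hS' m
      = S.orderEmbOfFin hS (j.succAbove m) := by
  have h := Finset.orderEmbOfFin_unique hS'
      (f := fun m : Fin k => S.orderEmbOfFin hS (j.succAbove m)) ?_ ?_
  · exact (congrFun h m).symm
  · intro x
    refine Finset.mem_erase.2 ⟨?_, Finset.orderEmbOfFin_mem _ _ _⟩
    intro hEq
    exact (Fin.succAbove_ne j x) ((S.orderEmbOfFin hS).injective hEq)
  · exact (S.orderEmbOfFin hS).strictMono.comp (Fin.strictMono_succAbove j)



/-- The bases of the lattice path matroid M[U,L]: the k-sets lying between U and L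
in the Gale order. -/
def IsLPMBasis {n k : ℕ} (U L : Finset (Fin n)) (hU : U.card = k) (hL : L.card = k)
    (B : Finset (Fin n)) : Prop :=
  ∃ hB : B.card = k, GaleLE U B hU hB ∧ GaleLE B L hB hL

theorem good_pair_quotient_bases_extend (n k : ℕ) (U L : Finset (Fin n))
    (hU : U.card = k) (hL : L.card = k) (hUL : GaleLE U L hU hL)
    (jdx idx : Fin k)
    (hgood : max 0 (((U.orderEmbOfFin hU jdx : Fin n) : ℕ) -
        ((L.orderEmbOfFin hL idx : Fin n) : ℕ) : ℤ) ≤ (jdx : ℤ) - (idx : ℤ))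
    (hU' : (U.erase (U.orderEmbOfFin hU jdx)).card = k - 1)
    (hL' : (L.erase (L.orderEmbOfFin hL idx)).card = k - 1) :
    ∀ B' : Finset (Fin n),
      IsLPMBasis (U.erase (U.orderEmbOfFin hU jdx)) (L.erase (L.orderEmbOfFin hL idx))
        hU' hL' B' →
      ∃ B : Finset (Fin n), IsLPMBasis U L hU hL B ∧ B' ⊆ B := by
  classical
  cases k with
  | zero => exact jdx.elim0
  | succ k =>
  intro B' hB'
  obtain ⟨hBc0, hGU0, hGL0⟩ := hB'
  -- normalize `k + 1 - 1` to `k`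
  have hBc : B'.card = k := hBc0
  have hU'' : (U.erase (U.orderEmbOfFin hU jdx)).card = k := hU'
  have hL'' : (L.erase (L.orderEmbOfFin hL idx)).card = k := hL'
  have hGU : GaleLE (U.erase (U.orderEmbOfFin hU jdx)) B' hU'' hBc := hGU0
  have hGL : GaleLE B' (L.erase (L.orderEmbOfFin hL idx)) hBc hL'' := hGL0
  clear hGU0 hGL0 hBc0
  -- value-level sequences
  set uv : ℕ → ℕ := fun m => if h : m < k + 1 then (U.orderEmbOfFin hU ⟨m, h⟩ : ℕ) else 0
    with huv_def
  set lv : ℕ → ℕ := fun m => if h : m < k + 1 then (L.orderEmbOfFin hL ⟨m, h⟩ : ℕ) else 0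
    with hlv_def
  set bv : ℕ → ℕ := fun m => if h : m < k then (B'.orderEmbOfFin hBc ⟨m, h⟩ : ℕ) else 0
    with hbv_def
  have huv : ∀ (m : ℕ) (h : m < k + 1), uv m = (U.orderEmbOfFin hU ⟨m, h⟩ : ℕ) :=
    fun m h => dif_pos h
  have hlv : ∀ (m : ℕ) (h : m < k + 1), lv m = (L.orderEmbOfFin hL ⟨m, h⟩ : ℕ) :=
    fun m h => dif_pos h
  have hbv : ∀ (m : ℕ) (h : m < k), bv m = (B'.orderEmbOfFin hBc ⟨m, h⟩ : ℕ) :=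
    fun m h => dif_pos h
  -- monotonicity, value level
  have humono : ∀ a b : ℕ, a ≤ b → b < k + 1 → uv a + (b - a) ≤ uv b := by
    intro a b hab hb
    have ha : a < k + 1 := by omega
    have hs : StrictMono (fun r : Fin (k+1) => (U.orderEmbOfFin hU r : ℕ)) :=
      fun x y hxy => (U.orderEmbOfFin hU).strictMono hxy
    have hgap := sm_gap hs (b - a) ⟨a, ha⟩ ⟨b, hb⟩ (by simp; omega)
    rw [huv a ha, huv b hb]
    omega
  have hlmono : ∀ a b : ℕ, a ≤ b → b < k + 1 → lv a + (b - a) ≤ lv b := by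
    intro a b hab hb
    have ha : a < k + 1 := by omega
    have hs : StrictMono (fun r : Fin (k+1) => (L.orderEmbOfFin hL r : ℕ)) :=
      fun x y hxy => (L.orderEmbOfFin hL).strictMono hxy
    have hgap := sm_gap hs (b - a) ⟨a, ha⟩ ⟨b, hb⟩ (by simp; omega)
    rw [hlv a ha, hlv b hb]
    omega
  have hbmono : ∀ a b : ℕ, a ≤ b → b < k → bv a + (b - a) ≤ bv b := by
    intro a b hab hb
    have ha : a < k := by omega
    have hs : StrictMono (fun r : Fin k => (B'.orderEmbOfFin hBc r : ℕ)) :=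
      fun x y hxy => (B'.orderEmbOfFin hBc).strictMono hxy
    have hgap := sm_gap hs (b - a) ⟨a, ha⟩ ⟨b, hb⟩ (by simp; omega)
    rw [hbv a ha, hbv b hb]
    omega
  have hjk : (jdx : ℕ) < k + 1 := jdx.isLt
  have hik : (idx : ℕ) < k + 1 := idx.isLt
  -- good pair, value level
  have hgood' : (idx : ℕ) ≤ jdx ∧ uv (jdx : ℕ) ≤ lv (idx : ℕ) + ((jdx : ℕ) - idx) := by
    rw [max_le_iff] at hgood
    rw [huv _ hjk, hlv _ hik]
    simp only [Fin.eta]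
    omega
  -- U' ≤ B' in value form
  have hub : ∀ r : ℕ, r < k →
      uv r ≤ bv r ∧ ((jdx : ℕ) ≤ r → uv (r + 1) ≤ bv r) := by
    intro r hr
    have h0 := hGU ⟨r, hr⟩
    rw [orderEmbOfFin_erase U hU jdx hU'' ⟨r, hr⟩] at h0
    have hsa : ((jdx.succAbove ⟨r, hr⟩ : Fin (k+1)) : ℕ)
        = if r < (jdx : ℕ) then r else r + 1 := by
      by_cases hc : r < (jdx : ℕ)
      · rw [Fin.succAbove_of_castSucc_lt _ _ (by simp [Fin.lt_def, hc])]
        simp [hc]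
      · rw [Fin.succAbove_of_le_castSucc _ _ (by simp [Fin.le_def]; omega)]
        simp [hc]
    have h0' : uv ((jdx.succAbove ⟨r, hr⟩ : Fin (k+1)) : ℕ) ≤ bv r := by
      rw [huv _ (jdx.succAbove ⟨r, hr⟩).isLt, hbv r hr]
      simp only [Fin.eta]
      exact h0
    rw [hsa] at h0'
    by_cases hc : r < (jdx : ℕ)
    · simp only [if_pos hc] at h0'
      exact ⟨h0', fun h => by omega⟩
    · simp only [if_neg hc] at h0'
      have := humono r (r + 1) (by omega) (by omega)
      exact ⟨by omega, fun _ => h0'⟩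
  -- B' ≤ L' in value form
  have hbl : ∀ r : ℕ, r < k →
      bv r ≤ lv (r + 1) ∧ (r < (idx : ℕ) → bv r ≤ lv r) := by
    intro r hr
    have h0 := hGL ⟨r, hr⟩
    rw [orderEmbOfFin_erase L hL idx hL'' ⟨r, hr⟩] at h0
    have hsa : ((idx.succAbove ⟨r, hr⟩ : Fin (k+1)) : ℕ)
        = if r < (idx : ℕ) then r else r + 1 := by
      by_cases hc : r < (idx : ℕ)
      · rw [Fin.succAbove_of_castSucc_lt _ _ (by simp [Fin.lt_def, hc])]
        simp [hc]
      · rw [Fin.succAbove_of_le_castSucc _ _ (by simp [Fin.le_def]; omega)]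
        simp [hc]
    have h0' : bv r ≤ lv ((idx.succAbove ⟨r, hr⟩ : Fin (k+1)) : ℕ) := by
      rw [hlv _ (idx.succAbove ⟨r, hr⟩).isLt, hbv r hr]
      simp only [Fin.eta]
      exact h0
    rw [hsa] at h0'
    by_cases hc : r < (idx : ℕ)
    · simp only [if_pos hc] at h0'
      have := hlmono r (r + 1) (by omega) (by omega)
      exact ⟨by omega, fun _ => h0'⟩
    · simp only [if_neg hc] at h0'
      exact ⟨h0', fun h => by omega⟩
  -- U ≤ L in value form
  have hul : ∀ m : ℕ, m < k + 1 → uv m ≤ lv m := by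
    intro m hm
    rw [huv m hm, hlv m hm]
    exact hUL ⟨m, hm⟩
    -- choose the insertion position
  have hQex : ∃ m : ℕ, (idx : ℕ) ≤ m ∧ (m = k ∨ (m < k ∧ lv m < bv m)) :=
    ⟨k, by omega, Or.inl rfl⟩
  set pnat := Nat.find hQex with hpnat_def
  have hpQ : (idx : ℕ) ≤ pnat ∧ (pnat = k ∨ (pnat < k ∧ lv pnat < bv pnat)) :=
    Nat.find_spec hQex
  have hpmin : ∀ m : ℕ, m < pnat →
      ¬((idx : ℕ) ≤ m ∧ (m = k ∨ (m < k ∧ lv m < bv m))) :=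
    fun m hm => Nat.find_min hQex hm
  have hple : pnat ≤ k := Nat.find_le ⟨by omega, Or.inl rfl⟩
  have hpi : (idx : ℕ) ≤ pnat := hpQ.1
  have hviol : pnat < k → lv pnat < bv pnat := by
    intro h
    rcases hpQ.2 with h1 | h1
    · omega
    · exact h1.2
  have hA : ∀ r : ℕ, r < pnat → bv r ≤ lv r := by
    intro r hr
    by_cases hc : r < (idx : ℕ)
    · exact (hbl r (by omega)).2 hc
    · have h1 := hpmin r hr
      omega
  -- the new element
  set xval : ℕ := if 0 < pnat then max (uv pnat) (bv (pnat - 1) + 1) else uv pnat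
    with hxval_def
  have hux : uv pnat ≤ xval := by
    rw [hxval_def]
    split
    · exact le_max_left _ _
    · exact le_rfl
  have hbpx : ∀ r : ℕ, r < pnat → bv r < xval := by
    intro r hr
    have h1 : bv r + ((pnat - 1) - r) ≤ bv (pnat - 1) :=
      hbmono r (pnat - 1) (by omega) (by omega)
    have h2 := le_max_right (uv pnat) (bv (pnat - 1) + 1)
    rw [hxval_def, if_pos (by omega)]
    omega
  have hxlp : xval ≤ lv pnat := by
    rcases Nat.eq_zero_or_pos pnat with h0 | h0
    · rw [hxval_def, if_neg (by omega)]
      exact hul pnat (by omega)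
    · have hb1 : bv (pnat - 1) ≤ lv (pnat - 1) := by
        by_cases hc : pnat - 1 < (idx : ℕ)
        · exact (hbl (pnat - 1) (by omega)).2 hc
        · exact hA (pnat - 1) (by omega)
      have hl1 := hlmono (pnat - 1) pnat (by omega) (by omega)
      have h2 := hul pnat (by omega)
      rw [hxval_def, if_pos h0]
      omega
  have hxb : ∀ r : ℕ, pnat ≤ r → r < k → xval < bv r := by
    intro r h1 h2
    have hv := hviol (by omega)
    have h3 := hbmono pnat r h1 h2
    omega
  have hpk1 : pnat < k + 1 := by omega
  have hxn : xval < n := by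
    have h1 : lv pnat < n := by
      rw [hlv pnat hpk1]
      exact (L.orderEmbOfFin hL ⟨pnat, hpk1⟩).isLt
    omega
  set x : Fin n := ⟨xval, hxn⟩ with hx_def
  have hxB' : x ∉ B' := by
    intro hx
    have hmem : x ∈ Set.range (B'.orderEmbOfFin hBc) := by
      rw [Finset.range_orderEmbOfFin]
      exact hx
    obtain ⟨m, hm⟩ := hmem
    have hmv : bv (m : ℕ) = xval := by
      have := hbv (m : ℕ) m.isLt
      simp only [Fin.eta] at this
      rw [this, hm, hx_def]
    rcases lt_or_ge (m : ℕ) pnat with h | h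
    · have := hbpx _ h; omega
    · have := hxb _ h m.isLt; omega
  have hBcard : (insert x B').card = k + 1 := by
    rw [Finset.card_insert_of_notMem hxB', hBc]
  -- the enumeration of the new set
  set fv : Fin (k + 1) → Fin n := fun m =>
    if h : (m : ℕ) < pnat then B'.orderEmbOfFin hBc ⟨(m : ℕ), by omega⟩
    else if h2 : (m : ℕ) = pnat then x
    else B'.orderEmbOfFin hBc ⟨(m : ℕ) - 1, by have := m.isLt; omega⟩ with hfv_def
  have hfval : ∀ m : Fin (k + 1), (fv m : ℕ) =
      if (m : ℕ) < pnat then bv (m : ℕ)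
      else if (m : ℕ) = pnat then xval else bv ((m : ℕ) - 1) := by
    intro m
    simp only [hfv_def]
    by_cases h : (m : ℕ) < pnat
    · rw [dif_pos h, if_pos h]
      exact (hbv _ _).symm
    · by_cases h2 : (m : ℕ) = pnat
      · rw [dif_neg h, dif_pos h2, if_neg h, if_pos h2, hx_def]
      · rw [dif_neg h, dif_neg h2, if_neg h, if_neg h2]
        exact (hbv _ _).symm
  have hfmono : StrictMono fv := by
    intro a c hac
    have hac' : (a : ℕ) < c := hac
    have hak := a.isLt
    have hck := c.isLt
    rw [Fin.lt_def, hfval a, hfval c]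
    rcases lt_trichotomy (c : ℕ) pnat with hc | hc | hc
    · rw [if_pos (by omega : (a : ℕ) < pnat), if_pos hc]
      have := hbmono (a : ℕ) (c : ℕ) (by omega) (by omega)
      omega
    · rw [if_pos (by omega : (a : ℕ) < pnat), if_neg (by omega), if_pos hc]
      exact hbpx _ (by omega)
    · have hc1 : pnat ≤ (c : ℕ) - 1 := by omega
      have hc2 : (c : ℕ) - 1 < k := by omega
      rw [if_neg (by omega : ¬ ((c : ℕ) < pnat)), if_neg (by omega : ¬ ((c : ℕ) = pnat))]
      have hxc := hxb _ hc1 hc2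
      rcases lt_trichotomy (a : ℕ) pnat with ha | ha | ha
      · rw [if_pos ha]
        have := hbpx _ ha
        omega
      · rw [if_neg (by omega), if_pos ha]
        omega
      · rw [if_neg (by omega), if_neg (by omega)]
        have := hbmono ((a : ℕ) - 1) ((c : ℕ) - 1) (by omega) (by omega)
        omega
  have hfmem : ∀ m : Fin (k + 1), fv m ∈ insert x B' := by
    intro m
    simp only [hfv_def]
    by_cases h : (m : ℕ) < pnat
    · rw [dif_pos h]
      exact Finset.mem_insert_of_mem (Finset.orderEmbOfFin_mem _ _ _)
    · by_cases h2 : (m : ℕ) = pnat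
      · rw [dif_neg h, dif_pos h2]
        exact Finset.mem_insert_self _ _
      · rw [dif_neg h, dif_neg h2]
        exact Finset.mem_insert_of_mem (Finset.orderEmbOfFin_mem _ _ _)
  have henum : fv = (insert x B').orderEmbOfFin hBcard :=
    Finset.orderEmbOfFin_unique hBcard hfmem hfmono
  have huvF : ∀ m : Fin (k + 1), uv (m : ℕ) = ((U.orderEmbOfFin hU m : Fin n) : ℕ) := by
    intro m
    simpa using huv (m : ℕ) m.isLt
  have hlvF : ∀ m : Fin (k + 1), lv (m : ℕ) = ((L.orderEmbOfFin hL m : Fin n) : ℕ) := by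
    intro m
    simpa using hlv (m : ℕ) m.isLt
  refine ⟨insert x B', ⟨hBcard, ?_, ?_⟩, Finset.subset_insert _ _⟩
  · intro m
    rw [← henum, Fin.le_def, hfval m, ← huvF m]
    have hmk := m.isLt
    by_cases h : (m : ℕ) < pnat
    · rw [if_pos h]
      exact (hub _ (by omega)).1
    · by_cases h2 : (m : ℕ) = pnat
      · rw [if_neg h, if_pos h2, h2]
        exact hux
      · rw [if_neg h, if_neg h2]
        by_cases h3 : (jdx : ℕ) ≤ (m : ℕ) - 1
        · have hh := (hub ((m : ℕ) - 1) (by omega)).2 h3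
          have hm1 : (m : ℕ) - 1 + 1 = (m : ℕ) := by omega
          rw [hm1] at hh
          exact hh
        · have hmj : (m : ℕ) ≤ (jdx : ℕ) := by omega
          have hpj : pnat < (jdx : ℕ) := by omega
          have h1 := hbmono pnat ((m : ℕ) - 1) (by omega) (by omega)
          have h2' := hviol (by omega)
          have h3' := hlmono (idx : ℕ) pnat hpi (by omega)
          have h4 := humono (m : ℕ) (jdx : ℕ) hmj hjk
          omega
  · intro m
    rw [← henum, Fin.le_def, hfval m, ← hlvF m]
    have hmk := m.isLt
    by_cases h : (m : ℕ) < pnat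
    · rw [if_pos h]
      exact hA _ h
    · by_cases h2 : (m : ℕ) = pnat
      · rw [if_neg h, if_pos h2, h2]
        exact hxlp
      · rw [if_neg h, if_neg h2]
        have hh := (hbl ((m : ℕ) - 1) (by omega)).1
        have hm1 : (m : ℕ) - 1 + 1 = (m : ℕ) := by omega
        rw [hm1] at hh
        exact hh
end

section
/- If the hyperplane H: x_i = α in R^n, with 1 < i < n and 2 ≤ α ≤ n-1, is used to split the permutahedron Π_n, then the split is bad: there exists a permutation σ ∈ S_n with σ(i-1)=α-1, σ(i)=α, σ(i+1)=α+1 such that both σ and s_α s_{α-1} s_α σ lie on H, while the Bruhat interval [σ, s_α s_{α-1} s_α σ] contains permutations strictly on both sides of H. -/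
/-!
Take `σ` to be the rotation `x ↦ x + (α - i)` of `ℤ/n`, so that the values `α - 1, α, α + 1`
sit in increasing order at the consecutive positions `i - 1, i, i + 1`. Left multiplication by
the adjacent transposition of values `k, k + 1` that appear in increasing order raises the
number of inversions by exactly one, so it is a Bruhat cover. Starting from `σ`, the braid
relation `s_α s_{α-1} s_α = s_{α-1} s_α s_{α-1}` yields two saturated chains from `σ` to
`s_α s_{α-1} s_α σ`; their second elements are `s_{α-1} σ` and `s_α σ`, which put `α - 1`,
respectively `α + 1`, in position `i`.
-/

open Equiv

theorem swap_braid {α : Type*} [DecidableEq α] {a b c : α} (hab : a ≠ b) (hac : a ≠ c)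
    (hbc : b ≠ c) : swap b c * swap a b * swap b c = swap a b * swap b c * swap a b := by
  rw [swap_mul_swap_mul_swap hab hac, swap_comm a b, swap_comm b c,
    swap_mul_swap_mul_swap hbc.symm hac.symm, swap_comm]

section

variable {n : ℕ} {σ : Perm (Fin n)} {p q r a b c : Fin n}

lemma swap_lt_swap_iff_of_val_eq_succ {u v : Fin n} (hab : (b : ℕ) = a + 1) :
    swap a b v < swap a b u ↔ (u = a ∧ v = b) ∨ (v < u ∧ ¬(u = b ∧ v = a)) := by
  simp only [swap_apply_def]
  split_ifs <;> (simp only [Fin.lt_def, Fin.ext_iff] at *; omega)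

lemma invCount_swap_mul (hpq : p < q) (hp : σ p = a) (hq : σ q = b)
    (hab : (b : ℕ) = a + 1) : invCount (swap a b * σ) = invCount σ + 1 := by
  subst hp hq
  unfold invCount
  rw [← Finset.card_insert_of_notMem (a := (p, q)) (by simp [← Fin.val_fin_lt, hab])]
  congr 1
  ext ⟨x, y⟩
  simp only [Finset.mem_filter, Finset.mem_insert, Finset.mem_univ, true_and, Prod.mk.injEq,
    Perm.mul_apply, swap_lt_swap_iff_of_val_eq_succ hab, EmbeddingLike.apply_eq_iff_eq]
  constructor
  · rintro ⟨hxy, ⟨rfl, rfl⟩ | ⟨hlt, -⟩⟩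
    · exact Or.inl ⟨rfl, rfl⟩
    · exact Or.inr ⟨hxy, hlt⟩
  · rintro (⟨rfl, rfl⟩ | ⟨hxy, hlt⟩)
    · exact ⟨hpq, Or.inl ⟨rfl, rfl⟩⟩
    · exact ⟨hxy, Or.inr ⟨hlt, fun ⟨rfl, rfl⟩ => lt_asymm hxy hpq⟩⟩

lemma bruhatCover_swap_mul (hpq : p < q) (hp : σ p = a) (hq : σ q = b)
    (hab : (b : ℕ) = a + 1) : BruhatCover σ (swap a b * σ) :=
  ⟨⟨a, b, fun h => by simp [h] at hab, rfl⟩, invCount_swap_mul hpq hp hq hab⟩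

/-- With `t = (a b)` and `s = (b c)`, the witnesses are the maximal chains
`σ ⋖ tσ ⋖ stσ ⋖ tstσ = stsσ` and `σ ⋖ sσ ⋖ tsσ ⋖ stsσ`. -/
theorem exists_bruhat_between_swap_mul_swap_mul_swap (hpq : p < q) (hqr : q < r)
    (hp : σ p = a) (hq : σ q = b) (hr : σ r = c) (hab : (b : ℕ) = a + 1)
    (hbc : (c : ℕ) = b + 1) :
    (swap b c * (swap a b * (swap b c * σ))) q = b ∧
    (∃ τ₁, BruhatLE σ τ₁ ∧ BruhatLE τ₁ (swap b c * (swap a b * (swap b c * σ))) ∧ τ₁ q = a) ∧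
    (∃ τ₂, BruhatLE σ τ₂ ∧ BruhatLE τ₂ (swap b c * (swap a b * (swap b c * σ))) ∧ τ₂ q = c) := by
  have hab' : a ≠ b := by rintro rfl; omega
  have hac' : a ≠ c := by rintro rfl; omega
  have hbc' : b ≠ c := by rintro rfl; omega
  have swap_ab : ∀ {x}, x ≠ a → x ≠ b → swap a b x = x := swap_apply_of_ne_of_ne
  have swap_bc : ∀ {x}, x ≠ b → x ≠ c → swap b c x = x := swap_apply_of_ne_of_ne
  refine ⟨?_, ⟨swap a b * σ, .single ?_, ?_, ?_⟩, ⟨swap b c * σ, .single ?_, ?_, ?_⟩⟩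
  · simp [hq, swap_ab hac'.symm hbc'.symm]
  · exact bruhatCover_swap_mul hpq hp hq hab
  · rw [show swap b c * (swap a b * (swap b c * σ)) = swap a b * (swap b c * (swap a b * σ)) by
      simp only [← mul_assoc, swap_braid hab' hac' hbc']]
    refine .head (bruhatCover_swap_mul (hpq.trans hqr) ?_ ?_ hbc) (.single ?_)
    · simp [hp]
    · simp [hr, swap_ab hac'.symm hbc'.symm]
    · refine bruhatCover_swap_mul hqr ?_ ?_ hab
      · simp [hq, swap_bc hab' hac']
      · simp [hr, swap_ab hac'.symm hbc'.symm]
  · simp [hq]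
  · exact bruhatCover_swap_mul hqr hq hr hbc
  · refine .head (bruhatCover_swap_mul (hpq.trans hqr) ?_ ?_ hab) (.single ?_)
    · simp [hp, swap_bc hab' hac']
    · simp [hr]
    · refine bruhatCover_swap_mul hpq ?_ ?_ hbc
      · simp [hp, swap_bc hab' hac']
      · simp [hq, swap_ab hac'.symm hbc'.symm]
  · simp [hq]

end

lemma addLeft_sub_apply_of_val_add_eq {n : ℕ} [NeZero n] {p k x y : Fin n}
    (h : (k : ℕ) + x = y + p) : Equiv.addLeft (k - p) x = y := by
  have hfin : k + x = y + p := Fin.ext (by simp only [Fin.val_add, h])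
  change k - p + x = y
  rw [sub_add_eq_add_sub, hfin, add_sub_cancel_right]

theorem interior_coordinate_hyperplane_split_is_bad (n i α : ℕ)
    (hi1 : 2 ≤ i) (hi2 : i ≤ n - 1) (ha1 : 2 ≤ α) (ha2 : α ≤ n - 1) :
    ∃ σ τ : Equiv.Perm (Fin n),
      τ = Equiv.swap (⟨α - 1, by omega⟩ : Fin n) ⟨α, by omega⟩ *
          (Equiv.swap (⟨α - 2, by omega⟩ : Fin n) ⟨α - 1, by omega⟩ *
           (Equiv.swap (⟨α - 1, by omega⟩ : Fin n) ⟨α, by omega⟩ * σ)) ∧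
      (σ ⟨i - 2, by omega⟩ : ℕ) + 1 = α - 1 ∧
      (σ ⟨i - 1, by omega⟩ : ℕ) + 1 = α ∧
      (σ ⟨i, by omega⟩ : ℕ) + 1 = α + 1 ∧
      (τ ⟨i - 1, by omega⟩ : ℕ) + 1 = α ∧
      (∃ τ₁ : Equiv.Perm (Fin n), BruhatLE σ τ₁ ∧ BruhatLE τ₁ τ ∧
        (τ₁ ⟨i - 1, by omega⟩ : ℕ) + 1 < α) ∧
      (∃ τ₂ : Equiv.Perm (Fin n), BruhatLE σ τ₂ ∧ BruhatLE τ₂ τ ∧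
        α < (τ₂ ⟨i - 1, by omega⟩ : ℕ) + 1) := by
  have : NeZero n := ⟨by omega⟩
  -- the rotation sending positions `i - 2, i - 1, i` to values `α - 2, α - 1, α` (0-indexed)
  set σ := Equiv.addLeft ((⟨α - 1, by omega⟩ : Fin n) - ⟨i - 1, by omega⟩)
  have hσ : ∀ (x y : Fin n), (x : ℕ) + α = y + i → σ x = y := fun x y h =>
    addLeft_sub_apply_of_val_add_eq (by simp only; omega)
  have hσ₀ : σ ⟨i - 2, by omega⟩ = ⟨α - 2, by omega⟩ := hσ _ _ (by simp only; omega)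
  have hσ₁ : σ ⟨i - 1, by omega⟩ = ⟨α - 1, by omega⟩ := hσ _ _ (by simp only; omega)
  have hσ₂ : σ ⟨i, by omega⟩ = ⟨α, by omega⟩ := hσ _ _ (by simp only; omega)
  obtain ⟨hτ, ⟨τ₁, hστ₁, hτ₁τ, hτ₁⟩, ⟨τ₂, hστ₂, hτ₂τ, hτ₂⟩⟩ :=
    exists_bruhat_between_swap_mul_swap_mul_swap (Fin.mk_lt_mk.2 (by omega))
      (Fin.mk_lt_mk.2 (by omega)) hσ₀ hσ₁ hσ₂ (by simp only; omega) (by simp only; omega)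
  refine ⟨σ, _, rfl, ?_, ?_, ?_, ?_, ⟨τ₁, hστ₁, hτ₁τ, ?_⟩, ⟨τ₂, hστ₂, hτ₂τ, ?_⟩⟩ <;>
    simp only [hσ₀, hσ₁, hσ₂, hτ, hτ₁, hτ₂] <;> omega
end
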